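/- Assume a_{j,k} ≤ K·j·k for some constant K > 0 and all j,k ∈ ℕ, and assume a_{j,j} > 0 for every j ∈ ℕ. Let c be a mild solution of the RBK system on [t₀,∞) with c(t₀) = c₀ ∈ X₁⁺. Then for every j ∈ ℕ, c_j(t) → 0 as t → ∞. -/

import Mathlib

/-!
For `j ≥ 1` let `N_j(t) = Σ_{i ≥ j} c_i(t)`. The collision rates `a_{m,k} c_m c_k` form a double
series dominated by `K ‖c‖₁²`, so the equations for `c_i`, `i ≥ j`, can be summed under the
integral. In the sum, the gain of a cluster of size `i ≥ j` from a collision `(i + k, k)` is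
matched by the loss term of its partner of size `i + k > j`, while the self-collision loss
`a_{j,j} c_j²` stays unmatched: `N_j(t) + a_{j,j} ∫_u^t c_j² ≤ N_j(u)`. Thus `N_j` is nonincreasing
and nonnegative, hence convergent; so `c_j = N_j - N_{j+1}` converges too, and as
`∫^∞ c_j² < ∞` and `a_{j,j} > 0`, its limit is `0`.
-/

open MeasureTheory Filter Topology
open scoped ENNReal

/-- Membership in `X₁⁺`: sequences `(c_j)_{j≥1}` (encoded as `c (j+1)` for `j : ℕ`)
with nonnegative entries and `Σ_{j≥1} j c_j < ∞`. -/
def MemX1plus (c : ℕ → ℝ) : Prop :=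
  (∀ j : ℕ, 0 ≤ c (j + 1)) ∧ Summable (fun j : ℕ => ((j : ℝ) + 1) * c (j + 1))

/-- The norm `‖c‖₁ = Σ_{j≥1} j c_j`. -/
noncomputable def norm1 (c : ℕ → ℝ) : ℝ := ∑' j : ℕ, ((j : ℝ) + 1) * c (j + 1)

/-- A (mild) solution of the RBK coagulation system on `[t₀,∞)`. -/
structure IsMildSolutionFrom (a : ℕ → ℕ → ℝ) (t₀ : ℝ) (c : ℝ → ℕ → ℝ) : Prop where
  mem : ∀ t : ℝ, t₀ ≤ t → MemX1plus (c t)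
  cont : ∀ j : ℕ, ContinuousOn (fun t => c t (j + 1)) (Set.Ici t₀)
  bdd : ∃ B : ℝ, ∀ t : ℝ, t₀ ≤ t → norm1 (c t) ≤ B
  loss_summable : ∀ (j : ℕ) (s : ℝ), t₀ ≤ s →
      Summable (fun k : ℕ => a (j + 1) (k + 1) * c s (k + 1))
  loss_integrable : ∀ (j : ℕ) (t : ℝ), t₀ ≤ t →
      IntervalIntegrable (fun s => ∑' k : ℕ, a (j + 1) (k + 1) * c s (k + 1)) volume t₀ t
  eqn : ∀ (j : ℕ) (t : ℝ), t₀ ≤ t →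
      c t (j + 1) = c t₀ (j + 1) + ∫ s in t₀..t,
        ((∑' k : ℕ, a (j + 1 + (k + 1)) (k + 1) * c s (j + 1 + (k + 1)) * c s (k + 1)) -
         (∑' k : ℕ, a (j + 1) (k + 1) * c s (j + 1) * c s (k + 1)))

/- Sizes are shifted by one, as in `MemX1plus`:
`pairRate a x m k = a_{m+1,k+1} x_{m+1} x_{k+1}`, `gain a x j` and `loss a x j` are the gain and
loss rates of size `j + 1`, and `numberTail x r = Σ_{i > r} x_i`. Writing `j + 1 + k` in `gain`
makes `gain a (c s) j - loss a (c s) j` definitionally the integrand of `IsMildSolutionFrom.eqn`. -/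
noncomputable section

def pairRate (a : ℕ → ℕ → ℝ) (x : ℕ → ℝ) (m k : ℕ) : ℝ :=
  a (m + 1) (k + 1) * x (m + 1) * x (k + 1)

def gain (a : ℕ → ℕ → ℝ) (x : ℕ → ℝ) (j : ℕ) : ℝ :=
  ∑' k, pairRate a x (j + 1 + k) k

def loss (a : ℕ → ℕ → ℝ) (x : ℕ → ℝ) (j : ℕ) : ℝ := ∑' k, pairRate a x j k

def tailFlux (a : ℕ → ℕ → ℝ) (x : ℕ → ℝ) (r : ℕ) : ℝ :=
  ∑' i, (gain a x (r + i) - loss a x (r + i))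

def numberTail (x : ℕ → ℝ) (r : ℕ) : ℝ := ∑' i, x (r + i + 1)

end

structure IsProductBounded (a : ℕ → ℕ → ℝ) (K : ℝ) : Prop where
  nonneg : ∀ j k : ℕ, 0 ≤ a (j + 1) (k + 1)
  le : ∀ j k : ℕ, a (j + 1) (k + 1) ≤ K * ((j : ℝ) + 1) * ((k : ℝ) + 1)

theorem exists_tendsto_atTop_of_antitoneOn_Ici {f : ℝ → ℝ} {t₀ : ℝ}
    (hf : AntitoneOn f (Set.Ici t₀)) (hbdd : BddBelow (f '' Set.Ici t₀)) :
    ∃ L, Tendsto f atTop (𝓝 L) := by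
  have hg : Antitone fun t => f (max t t₀) := fun u v huv =>
    hf (Set.mem_Ici.2 (le_max_right _ _)) (Set.mem_Ici.2 (le_max_right _ _))
      (max_le_max_right t₀ huv)
  obtain ⟨L, hL⟩ := hbdd
  refine ⟨_, (tendsto_atTop_ciInf hg ⟨L, ?_⟩).congr' ?_⟩
  · rintro _ ⟨t, rfl⟩
    exact hL ⟨_, Set.mem_Ici.2 (le_max_right _ _), rfl⟩
  · filter_upwards [eventually_ge_atTop t₀] with t ht
    rw [max_eq_left ht]

theorem nonpos_of_tendsto_of_intervalIntegral_le {g : ℝ → ℝ} {ℓ t₀ C : ℝ}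
    (hg : Tendsto g atTop (𝓝 ℓ)) (hcont : ContinuousOn g (Set.Ici t₀))
    (hC : ∀ u t, t₀ ≤ u → u ≤ t → ∫ s in u..t, g s ≤ C) : ℓ ≤ 0 := by
  by_contra! hℓ
  obtain ⟨T, hT⟩ := ((hg.eventually (eventually_ge_nhds (half_lt_self hℓ))).and
    (eventually_ge_atTop t₀)).exists_forall_of_atTop
  set t := T + 2 * (|C| + 1) / ℓ
  have hTt : T ≤ t := le_add_of_nonneg_right (by positivity)
  have hlower : ∫ _ in T..t, ℓ / 2 ≤ ∫ s in T..t, g s :=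
    intervalIntegral.integral_mono_on hTt intervalIntegrable_const
      ((hcont.mono fun s hs => (hT T le_rfl).2.trans (Set.uIcc_of_le hTt ▸ hs).1)
        |>.intervalIntegrable) fun s hs => (hT s hs.1).1
  have hlength : (t - T) * (ℓ / 2) = |C| + 1 := by
    simp only [t]
    field_simp
    ring
  rw [intervalIntegral.integral_const, smul_eq_mul, hlength] at hlower
  linarith [hC T t (hT T le_rfl).2 hTt, le_abs_self C]

theorem hasSum_tsum_fiber_comp {α β γ : Type*} {f : α → ℝ} (hf : Summable f)
    {e : β × γ → α} (he : e.Injective) :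
    HasSum (fun b => ∑' c, f (e (b, c))) (∑' p, f (e p)) :=
  (hf.comp_injective he).hasSum.prod_fiberwise fun b =>
    ((hf.comp_injective he).prod_factor b).hasSum

namespace MemX1plus

variable {x : ℕ → ℝ}

theorem summable (hx : MemX1plus x) : Summable fun j => x (j + 1) :=
  hx.2.of_nonneg_of_le hx.1 fun j => le_mul_of_one_le_left (hx.1 j) (by simp)

theorem moment_nonneg (hx : MemX1plus x) (j : ℕ) : 0 ≤ ((j : ℝ) + 1) * x (j + 1) :=
  mul_nonneg (by positivity) (hx.1 j)

theorem summable_moment_mul_moment (hx : MemX1plus x) :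
    Summable fun p : ℕ × ℕ => (p.1 + 1) * x (p.1 + 1) * ((p.2 + 1) * x (p.2 + 1)) :=
  hx.2.mul_of_nonneg hx.2 hx.moment_nonneg hx.moment_nonneg

theorem tsum_moment_mul_moment (hx : MemX1plus x) :
    ∑' p : ℕ × ℕ, (p.1 + 1) * x (p.1 + 1) * ((p.2 + 1) * x (p.2 + 1)) = norm1 x ^ 2 := by
  rw [← tsum_mul_tsum_of_summable_norm hx.2.norm hx.2.norm, norm1, sq]

theorem norm1_nonneg (hx : MemX1plus x) : 0 ≤ norm1 x :=
  tsum_nonneg hx.moment_nonneg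

theorem summable_numberTail (hx : MemX1plus x) (r : ℕ) : Summable fun i => x (r + i + 1) :=
  hx.summable.comp_injective (add_right_injective r)

theorem numberTail_nonneg (hx : MemX1plus x) (r : ℕ) : 0 ≤ numberTail x r :=
  tsum_nonneg fun i => hx.1 (r + i)

theorem numberTail_eq_add (hx : MemX1plus x) (r : ℕ) :
    numberTail x r = x (r + 1) + numberTail x (r + 1) := by
  rw [numberTail, (hx.summable_numberTail r).tsum_eq_zero_add, numberTail]
  exact congrArg _ (tsum_congr fun i => congrArg x (by omega))

end MemX1plus

section State

variable {a : ℕ → ℕ → ℝ} {K : ℝ} {x : ℕ → ℝ}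

theorem pairRate_nonneg (ha : IsProductBounded a K) (hx : MemX1plus x) (m k : ℕ) :
    0 ≤ pairRate a x m k :=
  mul_nonneg (mul_nonneg (ha.nonneg m k) (hx.1 m)) (hx.1 k)

theorem pairRate_le (ha : IsProductBounded a K) (hx : MemX1plus x) (m k : ℕ) :
    pairRate a x m k ≤ K * ((m + 1) * x (m + 1) * ((k + 1) * x (k + 1))) :=
  calc pairRate a x m k ≤ K * ((m : ℝ) + 1) * ((k : ℝ) + 1) * x (m + 1) * x (k + 1) :=
        mul_le_mul_of_nonneg_right (mul_le_mul_of_nonneg_right (ha.le m k) (hx.1 m)) (hx.1 k)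
    _ = _ := by ring

theorem summable_pairRate (ha : IsProductBounded a K) (hx : MemX1plus x) :
    Summable fun p : ℕ × ℕ => pairRate a x p.1 p.2 :=
  .of_nonneg_of_le (fun _ => pairRate_nonneg ha hx _ _) (fun _ => pairRate_le ha hx _ _)
    (hx.summable_moment_mul_moment.mul_left K)

theorem tsum_pairRate_le (ha : IsProductBounded a K) (hx : MemX1plus x) :
    ∑' p : ℕ × ℕ, pairRate a x p.1 p.2 ≤ K * norm1 x ^ 2 :=
  ((summable_pairRate ha hx).tsum_le_tsum (fun _ => pairRate_le ha hx _ _)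
    (hx.summable_moment_mul_moment.mul_left K)).trans_eq
    (by rw [tsum_mul_left, hx.tsum_moment_mul_moment])

theorem gain_nonneg (ha : IsProductBounded a K) (hx : MemX1plus x) (j : ℕ) : 0 ≤ gain a x j :=
  tsum_nonneg fun _ => pairRate_nonneg ha hx _ _

theorem loss_nonneg (ha : IsProductBounded a K) (hx : MemX1plus x) (j : ℕ) : 0 ≤ loss a x j :=
  tsum_nonneg fun _ => pairRate_nonneg ha hx _ _

variable (ha : IsProductBounded a K) (hx : MemX1plus x)
include ha hx

theorem hasSum_gain_tail (r : ℕ) :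
    HasSum (fun i => gain a x (r + i))
      (∑' p : ℕ × ℕ, pairRate a x (r + p.1 + 1 + p.2) p.2) :=
  hasSum_tsum_fiber_comp (summable_pairRate ha hx) (e := fun p => (r + p.1 + 1 + p.2, p.2))
    fun p q h => by simp only [Prod.mk.injEq] at h; exact Prod.ext (by omega) h.2

theorem hasSum_loss_tail (r : ℕ) :
    HasSum (fun i => loss a x (r + i)) (∑' p : ℕ × ℕ, pairRate a x (r + p.1) p.2) :=
  hasSum_tsum_fiber_comp (summable_pairRate ha hx) (e := fun p => (r + p.1, p.2))
    fun p q h => by simp only [Prod.mk.injEq] at h; exact Prod.ext (by omega) h.2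

theorem tsum_gain_tail_le_tsum_loss_tail (r : ℕ) :
    ∑' i, gain a x (r + i) ≤ ∑' i, loss a x (r + 1 + i) := by
  have hinj : Function.Injective fun p : ℕ × ℕ => (r + 1 + p.1, p.2) :=
    fun p q h => by simp only [Prod.mk.injEq] at h; exact Prod.ext (by omega) h.2
  have hloss := (summable_pairRate ha hx).comp_injective hinj
  rw [(hasSum_gain_tail ha hx r).tsum_eq, (hasSum_loss_tail ha hx (r + 1)).tsum_eq]
  calc ∑' p : ℕ × ℕ, pairRate a x (r + p.1 + 1 + p.2) p.2
      = ∑' p : ℕ × ℕ, pairRate a x (r + 1 + (p.1 + p.2)) p.2 :=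
        tsum_congr fun p => by rw [← add_assoc, add_right_comm r]
    _ ≤ ∑' p : ℕ × ℕ, pairRate a x (r + 1 + p.1) p.2 :=
        tsum_comp_le_tsum_of_inj hloss (fun _ => pairRate_nonneg ha hx _ _)
          (i := fun p : ℕ × ℕ => (p.1 + p.2, p.2))
          fun p q h => by simp only [Prod.mk.injEq] at h; exact Prod.ext (by omega) h.2

theorem pairRate_self_le_loss (r : ℕ) : pairRate a x r r ≤ loss a x r :=
  ((summable_pairRate ha hx).prod_factor r).le_tsum r fun _ _ => pairRate_nonneg ha hx _ _

theorem tailFlux_le (r : ℕ) : tailFlux a x r ≤ -pairRate a x r r := by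
  have hgain := (hasSum_gain_tail ha hx r).summable
  have hloss := (hasSum_loss_tail ha hx r).summable
  have hshift : ∑' i, loss a x (r + (i + 1)) = ∑' i, loss a x (r + 1 + i) :=
    tsum_congr fun i => by rw [add_comm i, add_assoc]
  rw [tailFlux, hgain.tsum_sub hloss, hloss.tsum_eq_zero_add, add_zero, hshift]
  linarith [tsum_gain_tail_le_tsum_loss_tail ha hx r, pairRate_self_le_loss ha hx r]

theorem tsum_loss_tail_le (r : ℕ) : ∑' i, loss a x (r + i) ≤ K * norm1 x ^ 2 := by
  rw [(hasSum_loss_tail ha hx r).tsum_eq]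
  refine (tsum_comp_le_tsum_of_inj (summable_pairRate ha hx) (fun _ => pairRate_nonneg ha hx _ _)
    (i := fun p : ℕ × ℕ => (r + p.1, p.2)) ?_).trans (tsum_pairRate_le ha hx)
  exact fun p q h => by simp only [Prod.mk.injEq] at h; exact Prod.ext (by omega) h.2

theorem summable_gain_add_loss_tail (r : ℕ) :
    Summable fun i => gain a x (r + i) + loss a x (r + i) :=
  (hasSum_gain_tail ha hx r).summable.add (hasSum_loss_tail ha hx r).summable

theorem tsum_gain_add_loss_tail_le (r : ℕ) :
    ∑' i, (gain a x (r + i) + loss a x (r + i)) ≤ 2 * (K * norm1 x ^ 2) := by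
  rw [(hasSum_gain_tail ha hx r).summable.tsum_add (hasSum_loss_tail ha hx r).summable]
  linarith [tsum_gain_tail_le_tsum_loss_tail ha hx r, tsum_loss_tail_le ha hx (r + 1),
    tsum_loss_tail_le ha hx r]

theorem abs_tailFlux_le (r : ℕ) :
    |tailFlux a x r| ≤ ∑' i, (gain a x (r + i) + loss a x (r + i)) := by
  have hgain := (hasSum_gain_tail ha hx r).summable
  have hloss := (hasSum_loss_tail ha hx r).summable
  rw [tailFlux, hgain.tsum_sub hloss, hgain.tsum_add hloss]
  have hg : 0 ≤ ∑' i, gain a x (r + i) := tsum_nonneg fun i => gain_nonneg ha hx (r + i)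
  have hl : 0 ≤ ∑' i, loss a x (r + i) := tsum_nonneg fun i => loss_nonneg ha hx (r + i)
  exact abs_le.mpr ⟨by linarith, by linarith⟩

end State

namespace IsMildSolutionFrom

variable {a : ℕ → ℕ → ℝ} {K t₀ t : ℝ} {c : ℝ → ℕ → ℝ}
variable (hc : IsMildSolutionFrom a t₀ c)
include hc

theorem integral_gain_sub_loss (j : ℕ) (ht : t₀ ≤ t) :
    ∫ s in t₀..t, (gain a (c s) j - loss a (c s) j) = c t (j + 1) - c t₀ (j + 1) :=
  eq_sub_of_add_eq' (hc.eqn j t ht).symm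

theorem aemeasurable_tsum_pairRate (m k : ℕ → ℕ) :
    AEMeasurable (fun s => ∑' n, pairRate a (c s) (m n) (k n))
      (volume.restrict (Set.Ioc t₀ t)) :=
  AEMeasurable.tsum fun _ => ContinuousOn.aemeasurable
    (((continuousOn_const.mul (hc.cont _)).mul (hc.cont _)).mono fun _ hs => hs.1.le)
    measurableSet_Ioc

theorem aemeasurable_gain (j : ℕ) :
    AEMeasurable (fun s => gain a (c s) j) (volume.restrict (Set.Ioc t₀ t)) :=
  hc.aemeasurable_tsum_pairRate (fun n => j + 1 + n) fun n => n

theorem aemeasurable_loss (j : ℕ) :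
    AEMeasurable (fun s => loss a (c s) j) (volume.restrict (Set.Ioc t₀ t)) :=
  hc.aemeasurable_tsum_pairRate (fun _ => j) fun n => n

variable (ha : IsProductBounded a K) (hK : 0 ≤ K)
include ha hK

theorem intervalIntegrable_tsum_gain_add_loss (r : ℕ) (ht : t₀ ≤ t) :
    IntervalIntegrable (fun s => ∑' i, (gain a (c s) (r + i) + loss a (c s) (r + i)))
      volume t₀ t := by
  obtain ⟨B, hB⟩ := hc.bdd
  rw [intervalIntegrable_iff_integrableOn_Ioc_of_le ht]
  refine IntegrableOn.of_bound measure_Ioc_lt_top (AEMeasurable.tsum fun i =>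
    (hc.aemeasurable_gain _).add (hc.aemeasurable_loss _)).aestronglyMeasurable
    (2 * (K * B ^ 2)) ?_
  filter_upwards [ae_restrict_mem measurableSet_Ioc] with s hs
  have hx := hc.mem s hs.1.le
  have hnorm1 : norm1 (c s) ≤ B := hB s hs.1.le
  have hnonneg : 0 ≤ ∑' i, (gain a (c s) (r + i) + loss a (c s) (r + i)) :=
    tsum_nonneg fun i => add_nonneg (gain_nonneg ha hx _) (loss_nonneg ha hx _)
  rw [Real.norm_of_nonneg hnonneg]
  refine (tsum_gain_add_loss_tail_le ha hx r).trans ?_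
  gcongr
  exact hx.norm1_nonneg

theorem intervalIntegrable_tailFlux (r : ℕ) (ht : t₀ ≤ t) :
    IntervalIntegrable (fun s => tailFlux a (c s) r) volume t₀ t := by
  refine (hc.intervalIntegrable_tsum_gain_add_loss ha hK r ht).mono_fun ?_ ?_ <;>
    rw [Set.uIoc_of_le ht]
  · exact (AEMeasurable.tsum fun i =>
      (hc.aemeasurable_gain _).sub (hc.aemeasurable_loss _)).aestronglyMeasurable
  · filter_upwards [ae_restrict_mem measurableSet_Ioc] with s hs
    exact (abs_tailFlux_le ha (hc.mem s hs.1.le) r).trans (le_abs_self _)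

theorem numberTail_sub_eq_integral (r : ℕ) (ht : t₀ ≤ t) :
    numberTail (c t) r - numberTail (c t₀) r = ∫ s in t₀..t, tailFlux a (c s) r := by
  have hmem : ∀ s ∈ Set.uIoc t₀ t, MemX1plus (c s) := fun s hs =>
    hc.mem s (by rw [Set.uIoc_of_le ht] at hs; exact hs.1.le)
  have hflux : HasSum (fun i => ∫ s in t₀..t, (gain a (c s) (r + i) - loss a (c s) (r + i)))
      (∫ s in t₀..t, tailFlux a (c s) r) := by
    refine intervalIntegral.hasSum_integral_of_dominated_convergence
      (fun i s => gain a (c s) (r + i) + loss a (c s) (r + i)) (fun i => ?_)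
      (fun i => ae_of_all _ fun s hs => ?_) (ae_of_all _ fun s hs => ?_)
      (hc.intervalIntegrable_tsum_gain_add_loss ha hK r ht) (ae_of_all _ fun s hs => ?_)
    · rw [Set.uIoc_of_le ht]
      exact ((hc.aemeasurable_gain _).sub (hc.aemeasurable_loss _)).aestronglyMeasurable
    · refine (norm_sub_le _ _).trans_eq ?_
      rw [Real.norm_of_nonneg (gain_nonneg ha (hmem s hs) _),
        Real.norm_of_nonneg (loss_nonneg ha (hmem s hs) _)]
    · exact summable_gain_add_loss_tail ha (hmem s hs) r
    · exact ((hasSum_gain_tail ha (hmem s hs) r).summable.sub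
        (hasSum_loss_tail ha (hmem s hs) r).summable).hasSum
  have htail : HasSum (fun i => ∫ s in t₀..t, (gain a (c s) (r + i) - loss a (c s) (r + i)))
      (numberTail (c t) r - numberTail (c t₀) r) := by
    simp_rw [hc.integral_gain_sub_loss _ ht]
    exact ((hc.mem t ht).summable_numberTail r).hasSum.sub
      ((hc.mem t₀ le_rfl).summable_numberTail r).hasSum
  exact htail.unique hflux

theorem numberTail_add_integral_le (r : ℕ) {u : ℝ} (hu : t₀ ≤ u) (hut : u ≤ t) :
    numberTail (c t) r + a (r + 1) (r + 1) * ∫ s in u..t, c s (r + 1) ^ 2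
      ≤ numberTail (c u) r := by
  have ht := hu.trans hut
  have hI := hc.intervalIntegrable_tailFlux ha hK r ht
  have hdiff : numberTail (c t) r - numberTail (c u) r = ∫ s in u..t, tailFlux a (c s) r := by
    rw [← intervalIntegral.integral_interval_sub_left hI
      (hc.intervalIntegrable_tailFlux ha hK r hu), ← hc.numberTail_sub_eq_integral ha hK r ht,
      ← hc.numberTail_sub_eq_integral ha hK r hu]
    ring
  have hsq : ContinuousOn (fun s => c s (r + 1) ^ 2) (Set.uIcc u t) :=
    ((hc.cont r).pow 2).mono (by rw [Set.uIcc_of_le hut]; exact fun s hs => hu.trans hs.1)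
  have hIut : IntervalIntegrable (fun s => tailFlux a (c s) r) volume u t :=
    hI.mono_set (by rw [Set.uIcc_of_le hut, Set.uIcc_of_le ht]; exact Set.Icc_subset_Icc_left hu)
  have hle : ∫ s in u..t, tailFlux a (c s) r
      ≤ ∫ s in u..t, -(a (r + 1) (r + 1) * c s (r + 1) ^ 2) :=
    intervalIntegral.integral_mono_on hut hIut (hsq.intervalIntegrable.const_mul _).neg fun s hs =>
        (tailFlux_le ha (hc.mem s (hu.trans hs.1)) r).trans_eq (by unfold pairRate; ring)
  rw [intervalIntegral.integral_neg, intervalIntegral.integral_const_mul] at hle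
  linarith

theorem antitoneOn_numberTail (r : ℕ) : AntitoneOn (fun t => numberTail (c t) r) (Set.Ici t₀) :=
  fun u hu t _ hut => by
    have hdiss : 0 ≤ a (r + 1) (r + 1) * ∫ s in u..t, c s (r + 1) ^ 2 :=
      mul_nonneg (ha.nonneg r r) (intervalIntegral.integral_nonneg hut fun _ _ => sq_nonneg _)
    linarith [hc.numberTail_add_integral_le ha hK r hu hut]

theorem exists_tendsto_numberTail (r : ℕ) :
    ∃ L, Tendsto (fun t => numberTail (c t) r) atTop (𝓝 L) :=
  exists_tendsto_atTop_of_antitoneOn_Ici (hc.antitoneOn_numberTail ha hK r)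
    ⟨0, by rintro _ ⟨t, ht, rfl⟩; exact (hc.mem t ht).numberTail_nonneg r⟩

theorem exists_tendsto (j : ℕ) : ∃ ℓ, Tendsto (fun t => c t (j + 1)) atTop (𝓝 ℓ) := by
  obtain ⟨L, hL⟩ := hc.exists_tendsto_numberTail ha hK j
  obtain ⟨L', hL'⟩ := hc.exists_tendsto_numberTail ha hK (j + 1)
  refine ⟨L - L', (hL.sub hL').congr' ?_⟩
  filter_upwards [eventually_ge_atTop t₀] with t ht
  rw [(hc.mem t ht).numberTail_eq_add j]
  ring

theorem mul_integral_sq_le (r : ℕ) {u : ℝ} (hu : t₀ ≤ u) (hut : u ≤ t) :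
    a (r + 1) (r + 1) * ∫ s in u..t, c s (r + 1) ^ 2 ≤ numberTail (c t₀) r := by
  linarith [hc.numberTail_add_integral_le ha hK r hu hut,
    hc.antitoneOn_numberTail ha hK r (Set.mem_Ici.2 le_rfl) hu hu,
    (hc.mem t (hu.trans hut)).numberTail_nonneg r]

end IsMildSolutionFrom

theorem rbk_long_time_decay_general
    (a : ℕ → ℕ → ℝ) (K : ℝ) (hK : 0 < K)
    (hpos : ∀ j k : ℕ, 0 ≤ a (j + 1) (k + 1))
    (hbound : ∀ j k : ℕ, a (j + 1) (k + 1) ≤ K * ((j : ℝ) + 1) * ((k : ℝ) + 1))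
    (hdiag : ∀ j : ℕ, 0 < a (j + 1) (j + 1))
    (t₀ : ℝ) (c : ℝ → ℕ → ℝ) (hc : IsMildSolutionFrom a t₀ c) :
    ∀ j : ℕ, Tendsto (fun t => c t (j + 1)) atTop (𝓝 0) := by
  intro j
  have ha : IsProductBounded a K := ⟨hpos, hbound⟩
  obtain ⟨ℓ, hℓ⟩ := hc.exists_tendsto ha hK.le j
  have hsq : ℓ ^ 2 ≤ 0 :=
    nonpos_of_tendsto_of_intervalIntegral_le (hℓ.pow 2) ((hc.cont j).pow 2)
      (C := numberTail (c t₀) j / a (j + 1) (j + 1)) fun u t hu hut => by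
        rw [le_div_iff₀' (hdiag j)]
        exact hc.mul_integral_sq_le ha hK.le j hu hut
  rwa [pow_eq_zero_iff two_ne_zero |>.mp (le_antisymm hsq (sq_nonneg ℓ))] at hℓ

/-- for `a_{j,k} ≤ K j k` with `a_{j,j} > 0` for every `j`, every
mild solution of the RBK system on `[t₀,∞)` satisfies `c_j(t) → 0` as `t → ∞`. -/
theorem rbk_long_time_decay
    (a : ℕ → ℕ → ℝ) (K : ℝ) (hK : 0 < K)
    (hsym : ∀ j k : ℕ, a (j + 1) (k + 1) = a (k + 1) (j + 1))
    (hpos : ∀ j k : ℕ, 0 ≤ a (j + 1) (k + 1))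
    (hbound : ∀ j k : ℕ, a (j + 1) (k + 1) ≤ K * ((j : ℝ) + 1) * ((k : ℝ) + 1))
    (hdiag : ∀ j : ℕ, 0 < a (j + 1) (j + 1))
    (t₀ : ℝ) (c : ℝ → ℕ → ℝ) (hc : IsMildSolutionFrom a t₀ c) :
    ∀ j : ℕ, Tendsto (fun t => c t (j + 1)) atTop (𝓝 0) :=
  rbk_long_time_decay_general a K hK hpos hbound hdiag t₀ c hc
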